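/- arXiv:1508.00385 — 7 statements merged into one kernel-verified Lean document; each statement's English description precedes it below -/
import Mathlib

section
/- Let n ≥ 3 and let γ_1 ≥ γ_2 ≥ ... ≥ γ_{n-1} ≥ 0 be reals with ∑_{i=1}^{n-1} γ_i = n and γ_1 ≥ α for some α ≥ n/(n-1). Then ∑_{i=1}^{n-1} e^{γ_i - 1} + e^{-1} ≥ e^{-1} + e^{α-1} + (n-2)·e^{(2-α)/(n-2)}. -/
/-! Both bounds are tangent-line estimates for `exp`. By Jensen, the last `n - 2` terms together
are at least `(n - 2) e^{(2 - γ₁)/(n - 2)}`, and `z ↦ e^{z - 1} + (n - 2) e^{(2 - z)/(n - 2)}` is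
nondecreasing once `z - 1 ≥ (2 - z)/(n - 2)`, i.e. once `z ≥ n/(n - 1)`; hence it may be evaluated
at `α ≤ γ₁` instead of `γ₁`. -/

open Real Finset

lemma Real.exp_mul_sub_add_one_le_exp (a x : ℝ) : exp a * (x - a + 1) ≤ exp x := by
  calc exp a * (x - a + 1) ≤ exp a * exp (x - a) := by gcongr; exact add_one_le_exp _
    _ = exp x := by rw [← exp_add, add_sub_cancel]

lemma Real.card_mul_exp_sum_div_card_le {ι : Type*} (s : Finset ι) (f : ι → ℝ) :
    #s * exp ((∑ i ∈ s, f i) / #s) ≤ ∑ i ∈ s, exp (f i) := by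
  rcases s.eq_empty_or_nonempty with rfl | hs
  · simp
  set a := (∑ i ∈ s, f i) / #s
  have hcard : (#s : ℝ) ≠ 0 := by positivity
  calc #s * exp a = ∑ i ∈ s, exp a * (f i - a + 1) := by
        rw [← mul_sum, sum_add_distrib, sum_sub_distrib]
        simp only [sum_const, nsmul_eq_mul, mul_one, a]
        field_simp
        ring
    _ ≤ ∑ i ∈ s, exp (f i) := sum_le_sum fun i _ ↦ exp_mul_sub_add_one_le_exp a (f i)

lemma Real.exp_add_mul_exp_div_le {k c x y : ℝ} (hk : 0 < k) (hx : (c - x) / k ≤ x) (hxy : x ≤ y) :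
    exp x + k * exp ((c - x) / k) ≤ exp y + k * exp ((c - y) / k) := by
  set u := (c - x) / k
  set v := (c - y) / k
  have hshift : k * (v - u) = x - y := by simp only [u, v]; field_simp; ring
  clear_value u v
  have hfirst := exp_mul_sub_add_one_le_exp x y
  have hsecond := mul_le_mul_of_nonneg_left (exp_mul_sub_add_one_le_exp u v) hk.le
  have hgap := mul_le_mul_of_nonneg_left (exp_le_exp.mpr hx) (sub_nonneg.mpr hxy)
  calc exp x + k * exp u ≤ exp x * (y - x + 1) + k * (exp u * (v - u + 1)) := by
        linear_combination hgap - exp u * hshift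
    _ ≤ exp y + k * exp v := add_le_add hfirst hsecond

theorem stmt_6 {n : ℕ} (hn : 3 ≤ n) (γ : Fin (n - 1) → ℝ)
    (hsum : ∑ i, γ i = n) (α : ℝ)
    (hα : (n : ℝ) / (n - 1) ≤ α) (h1 : α ≤ γ ⟨0, by omega⟩) :
    (∑ i, Real.exp (γ i - 1)) + Real.exp (-1) ≥
      Real.exp (-1) + Real.exp (α - 1) + ((n : ℝ) - 2) * Real.exp ((2 - α) / ((n : ℝ) - 2)) := by
  set i₀ : Fin (n - 1) := ⟨0, by omega⟩
  have hn' : (3 : ℝ) ≤ n := by exact_mod_cast hn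
  have hcard : (#(univ.erase i₀) : ℝ) = n - 2 := by
    rw [card_erase_of_mem (mem_univ _), card_univ, Fintype.card_fin]
    push_cast [Nat.sub_sub, show 1 + 1 ≤ n by omega]
    ring
  have hsplit (f : Fin (n - 1) → ℝ) : ∑ i, f i = f i₀ + ∑ i ∈ univ.erase i₀, f i :=
    (add_sum_erase _ _ (mem_univ _)).symm
  have htail : ∑ i ∈ univ.erase i₀, (γ i - 1) = 1 - (γ i₀ - 1) := by
    rw [sum_sub_distrib, sum_const, nsmul_eq_mul, hcard, mul_one]
    linarith [hsplit γ]
  have hjensen := card_mul_exp_sum_div_card_le (univ.erase i₀) (fun i ↦ γ i - 1)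
  rw [hcard, htail] at hjensen
  have hα' : (1 - (α - 1)) / ((n : ℝ) - 2) ≤ α - 1 := by
    rw [div_le_iff₀ (by linarith)]
    rw [div_le_iff₀ (by linarith)] at hα
    linarith
  have hmono := exp_add_mul_exp_div_le (by linarith) hα' (sub_le_sub_right h1 1)
  rw [show 1 - (α - 1) = 2 - α by ring] at hmono
  linarith [hsplit fun i ↦ exp (γ i - 1)]
end

section
/- Let G be a simple connected graph on n ≥ 2 vertices with normalized Laplacian eigenvalues γ_1 ≥ ... ≥ γ_n = 0 summing to n. Then the normalized Laplacian Estrada index NEE(G) = ∑_{i=1}^n e^{γ_i − 1} satisfies NEE(G) ≥ (n−1)·e^{1/(n−1)} + e^{−1}. -/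
open Matrix Real BigOperators

/-- Normalized Laplacian `L(G) = I - D^{-1/2} A D^{-1/2}`. -/
noncomputable def normLap {n : ℕ} (G : SimpleGraph (Fin n)) [DecidableRel G.Adj] :
    Matrix (Fin n) (Fin n) ℝ :=
  1 - (Matrix.diagonal fun i => ((G.degree i : ℝ)) ^ (-(1:ℝ)/2)) * G.adjMatrix ℝ *
      (Matrix.diagonal fun i => ((G.degree i : ℝ)) ^ (-(1:ℝ)/2))

/-- Randić index `R_{-1}(G) = ∑_{(i,j)∈E} 1/(d_i d_j)` (each unordered edge counted once). -/
noncomputable def randic {n : ℕ} (G : SimpleGraph (Fin n)) [DecidableRel G.Adj] : ℝ :=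
  (1/2) * ∑ i, ∑ j ∈ G.neighborFinset i, (1 : ℝ) / (G.degree i * G.degree j)

/-! The vector `D^{1/2} 𝟙` lies in the kernel of `L(G)`, because all degrees of a connected graph
on at least two vertices are positive; so some eigenvalue `γ_k` vanishes, and the other `n - 1`
eigenvalues sum to `tr L(G) = n`. The numbers `γ_i - 1`, `i ≠ k`, therefore have mean
`1 / (n - 1)`, and Jensen's inequality for `exp` gives the bound. -/

lemma Finset.card_mul_exp_mean_le_sum_exp {ι : Type*} (s : Finset ι) (x : ι → ℝ) :
    s.card * exp ((∑ i ∈ s, x i) / s.card) ≤ ∑ i ∈ s, exp (x i) := by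
  rcases s.eq_empty_or_nonempty with rfl | hs
  · simp
  set a := (∑ i ∈ s, x i) / s.card
  have hcard : (s.card : ℝ) ≠ 0 := by exact_mod_cast hs.card_ne_zero
  have tangent (i : ι) : exp a * (1 + (x i - a)) ≤ exp (x i) := by
    calc exp a * (1 + (x i - a)) ≤ exp a * exp (x i - a) := by
          gcongr; linarith [add_one_le_exp (x i - a)]
      _ = exp (x i) := by rw [← exp_add, add_sub_cancel]
  calc s.card * exp a = ∑ i ∈ s, exp a * (1 + (x i - a)) := by
        rw [← Finset.mul_sum, Finset.sum_add_distrib, Finset.sum_sub_distrib]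
        simp only [Finset.sum_const, nsmul_eq_mul, mul_one, a]
        field_simp
        ring
    _ ≤ ∑ i ∈ s, exp (x i) := Finset.sum_le_sum fun i _ => tangent i

lemma Matrix.IsHermitian.exists_eigenvalues_eq_zero {𝕜 ι : Type*} [RCLike 𝕜] [Fintype ι]
    [DecidableEq ι] {A : Matrix ι ι 𝕜} (hA : A.IsHermitian) {v : ι → 𝕜} (hv : v ≠ 0)
    (hAv : A *ᵥ v = 0) : ∃ k, hA.eigenvalues k = 0 := by
  have hdet : A.det = 0 := Matrix.exists_mulVec_eq_zero_iff.mp ⟨v, hv, hAv⟩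
  rw [hA.det_eq_prod_eigenvalues, Finset.prod_eq_zero_iff] at hdet
  obtain ⟨k, -, hk⟩ := hdet
  exact ⟨k, RCLike.ofReal_eq_zero.mp hk⟩

section normLap

variable {n : ℕ} (G : SimpleGraph (Fin n)) [DecidableRel G.Adj]

lemma trace_normLap : (normLap G).trace = n := by
  have hdiag (i : Fin n) : ((diagonal fun i => (G.degree i : ℝ) ^ (-(1:ℝ)/2)) * G.adjMatrix ℝ *
      (diagonal fun i => (G.degree i : ℝ) ^ (-(1:ℝ)/2))) i i = 0 := by
    rw [Matrix.mul_diagonal, Matrix.diagonal_mul, SimpleGraph.adjMatrix_apply, if_neg G.irrefl]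
    simp
  simp [normLap, Matrix.trace, hdiag]

lemma normLap_mulVec_sqrt_degree (hdeg : ∀ i, 0 < G.degree i) :
    normLap G *ᵥ (fun i => (G.degree i : ℝ) ^ ((1:ℝ)/2)) = 0 := by
  set D : Matrix (Fin n) (Fin n) ℝ := diagonal fun i => (G.degree i : ℝ) ^ (-(1:ℝ)/2)
  have hd (i : Fin n) : (0:ℝ) < G.degree i := by exact_mod_cast hdeg i
  have hD_sqrt : D *ᵥ (fun i => (G.degree i : ℝ) ^ ((1:ℝ)/2)) = Function.const _ 1 := by
    ext i
    rw [mulVec_diagonal, ← rpow_add (hd i)]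
    norm_num
  have hD_degree : D *ᵥ (fun i => (G.degree i : ℝ)) = fun i => (G.degree i : ℝ) ^ ((1:ℝ)/2) := by
    ext i
    rw [mulVec_diagonal, ← rpow_add_one (hd i).ne']
    norm_num
  have hA_const : G.adjMatrix ℝ *ᵥ Function.const _ 1 = fun i => (G.degree i : ℝ) := by
    ext i
    simp
  rw [normLap, sub_mulVec, one_mulVec, ← mulVec_mulVec, ← mulVec_mulVec, hD_sqrt, hA_const,
    hD_degree, sub_self]

end normLap

theorem stmt_7 {n : ℕ} (hn : 2 ≤ n) (G : SimpleGraph (Fin n)) [DecidableRel G.Adj]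
    (hG : G.Connected) (hL : (normLap G).IsHermitian) :
    ∑ i, Real.exp (hL.eigenvalues i - 1) ≥
      ((n : ℝ) - 1) * Real.exp (1 / ((n : ℝ) - 1)) + Real.exp (-1) := by
  have : Nontrivial (Fin n) := Fin.nontrivial_iff_two_le.mpr hn
  have hdeg : ∀ i, 0 < G.degree i := fun i => hG.preconnected.degree_pos_of_nontrivial i
  have hsqrt_ne : (fun i => (G.degree i : ℝ) ^ ((1:ℝ)/2)) ≠ 0 := fun h =>
    (rpow_pos_of_pos (Nat.cast_pos.mpr (hdeg ⟨0, by omega⟩)) _).ne' (congrFun h _)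
  obtain ⟨k, hk⟩ := hL.exists_eigenvalues_eq_zero hsqrt_ne (normLap_mulVec_sqrt_degree G hdeg)
  have hsum : ∑ i, hL.eigenvalues i = n := by
    simpa [trace_normLap] using hL.trace_eq_sum_eigenvalues.symm
  set s := Finset.univ.erase k
  have hcard : (s.card : ℝ) = n - 1 := by
    rw [Finset.card_erase_of_mem (Finset.mem_univ k), Finset.card_univ, Fintype.card_fin,
      Nat.cast_sub (by omega), Nat.cast_one]
  have hshift : ∑ i ∈ s, (hL.eigenvalues i - 1) = 1 := by
    rw [Finset.sum_sub_distrib, Finset.sum_erase _ hk, hsum, Finset.sum_const, nsmul_one, hcard]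
    ring
  calc ((n : ℝ) - 1) * exp (1 / ((n : ℝ) - 1)) + exp (-1)
      ≤ ∑ i ∈ s, exp (hL.eigenvalues i - 1) + exp (-1) := by
        gcongr
        simpa only [hcard, hshift] using s.card_mul_exp_mean_le_sum_exp (hL.eigenvalues · - 1)
    _ = ∑ i, exp (hL.eigenvalues i - 1) := by
        rw [← Finset.add_sum_erase _ _ (Finset.mem_univ k), hk, zero_sub, add_comm]
end

section
/- Let G be a connected bipartite graph on n ≥ 3 vertices. Then NEE(G) = ∑_{i=1}^n e^{γ_i − 1} ≥ e^{-1} + e + (n − 2), where γ_i are the normalized Laplacian eigenvalues. -/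
open Matrix Real BigOperators

/-! On a connected bipartite graph, `D^{1/2} 𝟙` and `D^{1/2} σ`, with `σ` the `±1`
sign of a 2-colouring, are eigenvectors of the normalized Laplacian for the eigenvalues `0` and `2`.
Its trace is `n`, so the remaining eigenvalues sum to `n - 2`, and `x ≤ exp (x - 1)` bounds each
of their terms from below. -/

theorem Matrix.IsHermitian.exists_eigenvalues_eq {𝕜 m : Type*} [RCLike 𝕜] [Fintype m]
    [DecidableEq m] {A : Matrix m m 𝕜} (hA : A.IsHermitian) {μ : ℝ} {x : m → 𝕜} (hx : x ≠ 0)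
    (h : A *ᵥ x = μ • x) : ∃ i, hA.eigenvalues i = μ := by
  have hμ : (μ : 𝕜) ∈ spectrum 𝕜 A := by
    rw [← Matrix.spectrum_toLin', ← Module.End.hasEigenvalue_iff_mem_spectrum]
    refine Module.End.hasEigenvalue_of_hasEigenvector ⟨Module.End.mem_eigenspace_iff.mpr ?_, hx⟩
    rw [Matrix.toLin'_apply, h, RCLike.real_smul_eq_coe_smul (K := 𝕜)]
  rw [hA.spectrum_eq_image_range] at hμ
  obtain ⟨_, ⟨i, rfl⟩, hi⟩ := hμ
  exact ⟨i, RCLike.ofReal_injective hi⟩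

theorem Matrix.IsHermitian.sum_eigenvalues_eq_trace {m : Type*} [Fintype m] [DecidableEq m]
    {A : Matrix m m ℝ} (hA : A.IsHermitian) : ∑ i, hA.eigenvalues i = A.trace := by
  simp [hA.trace_eq_sum_eigenvalues]

theorem Real.sum_add_exp_sub_one_sub_le_sum_exp {ι : Type*} [Fintype ι] (γ : ι → ℝ) {i j : ι}
    (hij : i ≠ j) :
    ∑ k, γ k + ((exp (γ i - 1) - γ i) + (exp (γ j - 1) - γ j)) ≤ ∑ k, exp (γ k - 1) := by
  have hgap : ∀ k, 0 ≤ exp (γ k - 1) - γ k := fun k => by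
    linarith [add_one_le_exp (γ k - 1)]
  have := Finset.add_le_sum (fun k _ => hgap k) (Finset.mem_univ i) (Finset.mem_univ j) hij
  rw [Finset.sum_sub_distrib] at this
  linarith

namespace SimpleGraph

variable {n : ℕ} (G : SimpleGraph (Fin n)) [DecidableRel G.Adj]

theorem trace_normLap : (normLap G).trace = n := by
  have hdiag : ∀ i, ((diagonal fun i => (G.degree i : ℝ) ^ (-(1:ℝ)/2)) * G.adjMatrix ℝ *
      diagonal fun i => (G.degree i : ℝ) ^ (-(1:ℝ)/2)) i i = 0 := fun i => by
    rw [Matrix.mul_diagonal, Matrix.diagonal_mul, adjMatrix_apply, if_neg (G.irrefl (v := i))]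
    simp
  simp [normLap, Matrix.trace, hdiag]

theorem normLap_mulVec_apply (v : Fin n → ℝ) (i : Fin n) :
    (normLap G *ᵥ v) i = v i - (G.degree i : ℝ) ^ (-(1:ℝ)/2) *
      ∑ j ∈ G.neighborFinset i, (G.degree j : ℝ) ^ (-(1:ℝ)/2) * v j := by
  rw [normLap, Matrix.sub_mulVec, Matrix.one_mulVec, Pi.sub_apply, Matrix.mul_assoc,
    ← Matrix.mulVec_mulVec, Matrix.mulVec_diagonal, ← Matrix.mulVec_mulVec,
    adjMatrix_mulVec_apply]
  simp only [Matrix.mulVec_diagonal]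

/-- The vector `D^{1/2} f`. -/
noncomputable def sqrtDegMul (f : Fin n → ℝ) : Fin n → ℝ :=
  fun i => f i * (G.degree i : ℝ) ^ ((1:ℝ)/2)

theorem normLap_mulVec_sqrtDegMul {f : Fin n → ℝ} {ε : ℝ}
    (hf : ∀ i j, G.Adj i j → f j = ε * f i) :
    normLap G *ᵥ G.sqrtDegMul f = (1 - ε) • G.sqrtDegMul f := by
  funext i
  have hsum : ∑ j ∈ G.neighborFinset i, (G.degree j : ℝ) ^ (-(1:ℝ)/2) * G.sqrtDegMul f j
      = G.degree i * (ε * f i) := by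
    rw [Finset.sum_congr rfl fun j hj => ?_, Finset.sum_const, card_neighborFinset_eq_degree,
      nsmul_eq_mul]
    have hj : G.Adj i j := (G.mem_neighborFinset i j).mp hj
    have hdj : (0 : ℝ) < G.degree j := Nat.cast_pos.mpr hj.degree_pos_right
    rw [sqrtDegMul, mul_left_comm, ← rpow_add hdj, hf i j hj]
    norm_num
  have hdi : (G.degree i : ℝ) ^ (-(1:ℝ)/2) * G.degree i = (G.degree i : ℝ) ^ ((1:ℝ)/2) := by
    rw [show (1:ℝ)/2 = -(1:ℝ)/2 + 1 by norm_num, rpow_add' (Nat.cast_nonneg _) (by norm_num),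
      rpow_one]
  rw [normLap_mulVec_apply, hsum, ← mul_assoc, hdi]
  simp only [sqrtDegMul, Pi.smul_apply, smul_eq_mul]
  ring

theorem sqrtDegMul_ne_zero {f : Fin n → ℝ} {i : Fin n} (hfi : f i ≠ 0) (hi : 0 < G.degree i) :
    G.sqrtDegMul f ≠ 0 :=
  Function.ne_iff.mpr ⟨i, mul_ne_zero hfi (by positivity)⟩

end SimpleGraph

theorem SimpleGraph.Coloring.neg_one_pow_adj {V : Type*} {G : SimpleGraph V}
    (C : G.Coloring (Fin 2)) {i j : V} (h : G.Adj i j) :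
    (-1 : ℝ) ^ (C j : ℕ) = -1 * (-1) ^ (C i : ℕ) := by
  have hC := C.valid h
  generalize C i = a at hC ⊢
  generalize C j = b at hC ⊢
  fin_cases a <;> fin_cases b <;> simp_all

theorem stmt_9 {n : ℕ} (hn : 3 ≤ n) (G : SimpleGraph (Fin n)) [DecidableRel G.Adj]
    (hG : G.Connected) (hbip : G.Colorable 2) (hL : (normLap G).IsHermitian) :
    ∑ i, Real.exp (hL.eigenvalues i - 1) ≥
      Real.exp (-1) + Real.exp 1 + ((n : ℝ) - 2) := by
  have : Nontrivial (Fin n) := Fin.nontrivial_iff_two_le.mpr (by omega)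
  have hdeg : 0 < G.degree ⟨0, by omega⟩ := hG.preconnected.degree_pos_of_nontrivial _
  obtain ⟨C⟩ := hbip
  obtain ⟨i₀, hi₀⟩ := hL.exists_eigenvalues_eq (μ := 0)
    (G.sqrtDegMul_ne_zero (f := 1) one_ne_zero hdeg)
    (by simpa using G.normLap_mulVec_sqrtDegMul (f := 1) (ε := 1) (by simp))
  obtain ⟨i₂, hi₂⟩ := hL.exists_eigenvalues_eq (μ := 2)
    (G.sqrtDegMul_ne_zero (f := fun i => (-1) ^ (C i : ℕ)) (by simp) hdeg)
    (by simpa [one_add_one_eq_two] using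
      G.normLap_mulVec_sqrtDegMul (ε := -1) fun _ _ h => C.neg_one_pow_adj h)
  have hne : i₀ ≠ i₂ := fun h => by simp [h, hi₂] at hi₀
  have htr : ∑ i, hL.eigenvalues i = n := by
    rw [hL.sum_eigenvalues_eq_trace, G.trace_normLap]
  have hbound := Real.sum_add_exp_sub_one_sub_le_sum_exp hL.eigenvalues hne
  rw [htr, hi₀, hi₂] at hbound
  norm_num at hbound
  linarith
end

section
/- Let n ≥ 4, and let γ_2 ≥ ... ≥ γ_{n-1} ≥ 0 be reals summing to n−2 with 2 ≥ γ_2 ≥ β for some 1 < β ≤ 2. Then e^{-1} + e + ∑_{i=2}^{n-1} e^{γ_i − 1} ≥ e^{-1} + e + e^{β−1} + (n−3)·e^{(1−β)/(n−3)}. -/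
/-!
Split off the largest coordinate `t = γ₀ ≥ β`. By Jensen for `exp`, the remaining `n - 3`
terms contribute at least `(n - 3) · exp ((1 - t) / (n - 3))`, since their exponents sum to
`1 - t`. The resulting function `t ↦ exp (t - 1) + (n - 3) · exp ((1 - t) / (n - 3))` is
nondecreasing for `t ≥ 1`, so its value at `t` dominates its value at `β`.
-/

open Real BigOperators Finset

theorem card_mul_exp_sum_div_card_le_sum_exp {ι : Type*} {s : Finset ι} (hs : s.Nonempty)
    (x : ι → ℝ) : #s * exp ((∑ i ∈ s, x i) / #s) ≤ ∑ i ∈ s, exp (x i) := by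
  have hcard : (0 : ℝ) < #s := by exact_mod_cast hs.card_pos
  have hjensen := convexOn_exp.map_sum_le (t := s) (w := fun _ => (#s : ℝ)⁻¹) (p := x)
    (fun _ _ => by positivity) (by simp [hcard.ne']) (fun _ _ => Set.mem_univ _)
  simp only [smul_eq_mul, ← mul_sum] at hjensen
  rw [inv_mul_eq_div] at hjensen
  calc (#s : ℝ) * exp ((∑ i ∈ s, x i) / #s)
      ≤ #s * ((#s : ℝ)⁻¹ * ∑ i ∈ s, exp (x i)) := by gcongr
    _ = ∑ i ∈ s, exp (x i) := by field_simp

theorem exp_mul_sub_le_exp_sub_exp (x y : ℝ) : exp x * (y - x) ≤ exp y - exp x := by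
  have h := mul_le_mul_of_nonneg_left (add_one_le_exp (y - x)) (exp_pos x).le
  rw [← exp_add, add_sub_cancel] at h
  linarith

theorem monotoneOn_exp_sub_one_add_mul_exp {m : ℝ} (hm : 0 < m) :
    MonotoneOn (fun t => exp (t - 1) + m * exp ((1 - t) / m)) (Set.Ici 1) := by
  intro a ha b _ hab
  set u := (1 - a) / m
  set v := (1 - b) / m
  have hexp_le : exp u ≤ exp (a - 1) := by
    gcongr
    rw [div_le_iff₀ hm]
    nlinarith [Set.mem_Ici.1 ha]
  have hm_uv : m * (v - u) = a - b := by simp only [u, v]; field_simp; ring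
  have hleft := exp_mul_sub_le_exp_sub_exp (a - 1) (b - 1)
  have hright := mul_le_mul_of_nonneg_left (exp_mul_sub_le_exp_sub_exp u v) hm.le
  rw [mul_left_comm, hm_uv] at hright
  show exp (a - 1) + m * exp u ≤ exp (b - 1) + m * exp v
  nlinarith [mul_nonneg (sub_nonneg.2 hexp_le) (sub_nonneg.2 hab)]

theorem stmt_10 {n : ℕ} (hn : 4 ≤ n) (γ : Fin (n - 2) → ℝ)
    (hsum : ∑ i, γ i = (n : ℝ) - 2) (β : ℝ)
    (hβ1 : 1 < β) (hlb : β ≤ γ ⟨0, by omega⟩) :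
    Real.exp (-1) + Real.exp 1 + ∑ i, Real.exp (γ i - 1) ≥
      Real.exp (-1) + Real.exp 1 + Real.exp (β - 1) +
        ((n : ℝ) - 3) * Real.exp ((1 - β) / ((n : ℝ) - 3)) := by
  set i₀ : Fin (n - 2) := ⟨0, by omega⟩
  set rest := univ.erase i₀
  have hcard : (#rest : ℝ) = n - 3 := by
    rw [card_erase_of_mem (mem_univ _), card_univ, Fintype.card_fin,
      show n - 2 - 1 = n - 3 by omega, Nat.cast_sub (by omega)]
    norm_num
  have hm : (0 : ℝ) < n - 3 := by
    have : (4 : ℝ) ≤ n := by exact_mod_cast hn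
    linarith
  have hrest_nonempty : rest.Nonempty :=
    card_pos.1 (by rw [← Nat.cast_pos (α := ℝ), hcard]; exact hm)
  have hrest_sum : ∑ i ∈ rest, (γ i - 1) = 1 - γ i₀ := by
    rw [sum_sub_distrib, sum_const, nsmul_one, hcard,
      ← add_sub_cancel_left (γ i₀) (∑ i ∈ rest, γ i), add_sum_erase _ _ (mem_univ _), hsum]
    ring
  have hjensen := card_mul_exp_sum_div_card_le_sum_exp hrest_nonempty (fun i => γ i - 1)
  rw [hrest_sum, hcard] at hjensen
  have hmono_tail := monotoneOn_exp_sub_one_add_mul_exp hm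
    (Set.mem_Ici.2 hβ1.le) (Set.mem_Ici.2 (hβ1.le.trans hlb)) hlb
  dsimp only at hmono_tail
  rw [← add_sum_erase _ _ (mem_univ i₀)]
  linarith
end

section
/- Let G be a connected bipartite graph on n ≥ 3 vertices with normalized Laplacian eigenvalues γ_1 = 2 > γ_2 ≥ ... ≥ γ_{n-1} > γ_n = 0. Then the normalized Laplacian energy NE(G) = ∑_{i=1}^n |γ_i − 1| satisfies NE(G) ≤ 2 + √(a(n−2)), where a = 2∑_{(i,j)∈E} 1/(d_i d_j) − 2. -/
/-!
Since `1 - L` has eigenvalues `1 - γᵢ`, the trace of `(1 - L)²` gives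
`∑ᵢ (γᵢ - 1)² = 2 R₋₁(G)`. The two extreme eigenvalues `2` and `0` contribute `1` each to both
`∑ᵢ |γᵢ - 1|` and `∑ᵢ (γᵢ - 1)²`, and Cauchy–Schwarz bounds the remaining `n - 2` terms.
-/

open Matrix Real BigOperators

open Finset

theorem Finset.sum_abs_le_sqrt_card_mul_sum_sq {ι : Type*} (s : Finset ι) (f : ι → ℝ) :
    ∑ i ∈ s, |f i| ≤ √(#s * ∑ i ∈ s, f i ^ 2) := by
  apply le_sqrt_of_sq_le
  simpa only [sq_abs] using sq_sum_le_card_mul_sum_sq (s := s) (f := fun i => |f i|)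

theorem sum_abs_le_two_add_sqrt {ι : Type*} [Fintype ι] [DecidableEq ι] {f : ι → ℝ} {a b : ι}
    (hab : a ≠ b) (ha : |f a| = 1) (hb : |f b| = 1) :
    ∑ i, |f i| ≤ 2 + √((∑ i, f i ^ 2 - 2) * (Fintype.card ι - 2)) := by
  have hsplit (g : ι → ℝ) : ∑ i, g i = g a + g b + ∑ i ∈ {a, b}ᶜ, g i := by
    rw [← sum_pair hab, sum_add_sum_compl]
  have hcard : (#({a, b}ᶜ : Finset ι) : ℝ) = Fintype.card ι - 2 := by
    rw [card_compl, Nat.cast_sub (card_le_univ _), card_pair hab, Nat.cast_two]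
  have hsq : ∑ i, f i ^ 2 - 2 = ∑ i ∈ {a, b}ᶜ, f i ^ 2 := by
    rw [hsplit (f · ^ 2), ← sq_abs (f a), ← sq_abs (f b), ha, hb]
    ring
  rw [hsplit (|f ·|), ha, hb, hsq, ← hcard, mul_comm, one_add_one_eq_two]
  exact add_le_add_right (sum_abs_le_sqrt_card_mul_sum_sq _ f) 2

namespace Matrix.IsHermitian

variable {n 𝕜 : Type*} [RCLike 𝕜] [Fintype n] [DecidableEq n] {A : Matrix n n 𝕜}

theorem trace_cfc (hA : A.IsHermitian) (f : ℝ → ℝ) :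
    (cfc f A).trace = ∑ i, (f (hA.eigenvalues i) : 𝕜) := by
  rw [hA.cfc_eq f, IsHermitian.cfc, Unitary.conjStarAlgAut_apply, trace_mul_cycle,
    Unitary.coe_star_mul_self, one_mul, trace_diagonal]
  rfl

theorem trace_one_sub_sq (hA : A.IsHermitian) :
    ((1 - A) ^ 2).trace = ∑ i, ((1 - hA.eigenvalues i) ^ 2 : 𝕜) := by
  have hcfc : cfc (fun x : ℝ => (1 - x) ^ 2) A = (1 - A) ^ 2 := by
    rw [cfc_pow .., cfc_sub .., cfc_const_one ℝ A, cfc_id' ℝ A]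
  rw [← hcfc, hA.trace_cfc]
  push_cast
  rfl

end Matrix.IsHermitian

-- `0 ^ (-1/2) = 0` for `Real.rpow`, so this also holds at `x = 0`, i.e. at isolated vertices.
theorem Real.rpow_neg_half_mul_self {x : ℝ} (hx : 0 ≤ x) :
    x ^ (-(1:ℝ)/2) * x ^ (-(1:ℝ)/2) = x⁻¹ := by
  rw [← rpow_add' hx (by norm_num), ← rpow_neg_one]
  norm_num

namespace SimpleGraph

variable {n : ℕ} (G : SimpleGraph (Fin n)) [DecidableRel G.Adj]

theorem one_sub_normLap_apply (i j : Fin n) :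
    (1 - normLap G) i j = (G.degree i : ℝ) ^ (-(1:ℝ)/2) * (if G.Adj i j then 1 else 0) *
      (G.degree j : ℝ) ^ (-(1:ℝ)/2) := by
  rw [normLap, sub_sub_cancel, mul_diagonal, diagonal_mul, adjMatrix_apply]

theorem one_sub_normLap_mul_apply_swap (i j : Fin n) :
    (1 - normLap G) i j * (1 - normLap G) j i =
      if G.Adj i j then ((G.degree i : ℝ) * G.degree j)⁻¹ else 0 := by
  rw [one_sub_normLap_apply, one_sub_normLap_apply]
  by_cases hij : G.Adj i j
  · rw [if_pos hij, if_pos hij.symm, if_pos hij, mul_inv,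
      ← rpow_neg_half_mul_self (Nat.cast_nonneg (G.degree i)),
      ← rpow_neg_half_mul_self (Nat.cast_nonneg (G.degree j))]
    ring
  · simp [hij]

theorem trace_one_sub_normLap_sq : ((1 - normLap G) ^ 2).trace = 2 * randic G := by
  simp only [sq, trace, diag_apply, mul_apply, one_sub_normLap_mul_apply_swap, randic,
    neighborFinset_eq_filter, sum_filter, one_div]
  ring

end SimpleGraph

theorem stmt_13 {n : ℕ} (hn : 3 ≤ n) (G : SimpleGraph (Fin n)) [DecidableRel G.Adj]
    (hL : (normLap G).IsHermitian)
    (γ : Fin n → ℝ) (e : Equiv.Perm (Fin n)) (hγ : ∀ i, γ i = hL.eigenvalues (e i))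
    (hfirst : γ ⟨0, by omega⟩ = 2)
    (hlast : γ ⟨n - 1, by omega⟩ = 0) :
    ∑ i, |γ i - 1| ≤ 2 + Real.sqrt ((2 * randic G - 2) * ((n : ℝ) - 2)) := by
  have hsq : ∑ i, (γ i - 1) ^ 2 = 2 * randic G := by
    simp_rw [hγ, sub_sq_comm _ (1 : ℝ)]
    rw [Equiv.sum_comp e (fun i => (1 - hL.eigenvalues i) ^ 2), ← G.trace_one_sub_normLap_sq,
      hL.trace_one_sub_sq]
    rfl
  have hbound := sum_abs_le_two_add_sqrt (f := (γ · - 1))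
    (a := ⟨0, by omega⟩) (b := ⟨n - 1, by omega⟩) (Fin.ne_of_val_ne (show 0 ≠ n - 1 by omega))
    (by norm_num [hfirst]) (by norm_num [hlast])
  rwa [hsq, Fintype.card_fin] at hbound
end

section
/- For every simple connected graph G on n ≥ 2 vertices, (2/n)·∑_{(i,j)∈E} 1/(d_i d_j) ≥ 1/(n−1), with equality if and only if G is the complete graph K_n. -/
open Matrix Real BigOperators

/-!
Every neighbour `j` of a vertex `i` has `d_j ≤ n - 1`, so the `d_i` edges at `i` contribute
`∑_{j ~ i} 1/(d_i d_j) ≥ d_i · 1/(d_i (n - 1)) = 1/(n - 1)`; summing over the `n` vertices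
gives `∑_i ∑_{j ~ i} 1/(d_i d_j) ≥ n/(n - 1)`. The excess is a sum of nonnegative terms
`d_i⁻¹ (d_j⁻¹ - (n - 1)⁻¹)`, so equality forces every vertex having a neighbour, i.e. every
vertex, to have degree `n - 1`.
-/

namespace SimpleGraph

variable {V : Type*} [Fintype V] (G : SimpleGraph V) [DecidableRel G.Adj]

lemma degree_le_card_sub_one (v : V) : G.degree v ≤ Fintype.card V - 1 :=
  Nat.le_sub_one_of_lt (G.degree_lt_card_verts v)

lemma eq_top_iff_forall_degree_eq : G = ⊤ ↔ ∀ v, G.degree v = Fintype.card V - 1 := by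
  simp only [eq_top_iff_forall_isUniversal, degree_eq_card_sub_one]

lemma sum_one_div_degree_mul_eq (hdeg : ∀ v, 0 < G.degree v) :
    ∑ i, ∑ j ∈ G.neighborFinset i, (1 : ℝ) / (G.degree i * G.degree j) =
      Fintype.card V / (Fintype.card V - 1 : ℕ) +
        ∑ i, ∑ j ∈ G.neighborFinset i,
          (G.degree i : ℝ)⁻¹ * ((G.degree j : ℝ)⁻¹ - ((Fintype.card V - 1 : ℕ) : ℝ)⁻¹) := by
  set k : ℝ := ((Fintype.card V - 1 : ℕ) : ℝ)
  have hvertex (i : V) : ∑ j ∈ G.neighborFinset i, (1 : ℝ) / (G.degree i * G.degree j) =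
      k⁻¹ + ∑ j ∈ G.neighborFinset i, (G.degree i : ℝ)⁻¹ * ((G.degree j : ℝ)⁻¹ - k⁻¹) := by
    have hi : (G.degree i : ℝ) ≠ 0 := by exact_mod_cast (hdeg i).ne'
    simp only [mul_sub, Finset.sum_sub_distrib, Finset.sum_const, card_neighborFinset_eq_degree,
      nsmul_eq_mul, one_div, mul_inv]
    field_simp
    ring
  rw [Finset.sum_congr rfl fun i _ => hvertex i, Finset.sum_add_distrib, Finset.sum_const,
    Finset.card_univ, nsmul_eq_mul, div_eq_mul_inv]

lemma inv_degree_mul_sub_nonneg (i : V) {j : V} (hj : 0 < G.degree j) :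
    0 ≤ (G.degree i : ℝ)⁻¹ * ((G.degree j : ℝ)⁻¹ - ((Fintype.card V - 1 : ℕ) : ℝ)⁻¹) := by
  have hjk : (G.degree j : ℝ) ≤ (Fintype.card V - 1 : ℕ) := by
    exact_mod_cast G.degree_le_card_sub_one j
  exact mul_nonneg (by positivity) (sub_nonneg.mpr (inv_anti₀ (mod_cast hj) hjk))

lemma inv_degree_mul_sub_eq_zero_iff {i : V} (hi : 0 < G.degree i) (j : V) :
    (G.degree i : ℝ)⁻¹ * ((G.degree j : ℝ)⁻¹ - ((Fintype.card V - 1 : ℕ) : ℝ)⁻¹) = 0 ↔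
      G.degree j = Fintype.card V - 1 := by
  rw [mul_eq_zero, sub_eq_zero, _root_.inv_inj, Nat.cast_inj]
  simp [hi.ne']

theorem card_div_le_sum_one_div_degree_mul (hdeg : ∀ v, 0 < G.degree v) :
    (Fintype.card V : ℝ) / (Fintype.card V - 1 : ℕ) ≤
      ∑ i, ∑ j ∈ G.neighborFinset i, (1 : ℝ) / (G.degree i * G.degree j) := by
  rw [G.sum_one_div_degree_mul_eq hdeg]
  exact le_add_of_nonneg_right <| Finset.sum_nonneg fun i _ ↦
    Finset.sum_nonneg fun j _ ↦ G.inv_degree_mul_sub_nonneg i (hdeg j)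

theorem sum_one_div_degree_mul_eq_card_div_iff (hdeg : ∀ v, 0 < G.degree v) :
    ∑ i, ∑ j ∈ G.neighborFinset i, (1 : ℝ) / (G.degree i * G.degree j) =
      (Fintype.card V : ℝ) / (Fintype.card V - 1 : ℕ) ↔ G = ⊤ := by
  have hnonneg (i j : V) := G.inv_degree_mul_sub_nonneg i (hdeg j)
  rw [G.sum_one_div_degree_mul_eq hdeg, add_eq_left, Finset.sum_eq_zero_iff_of_nonneg
    fun i _ ↦ Finset.sum_nonneg fun j _ ↦ hnonneg i j]
  simp only [Finset.mem_univ, true_implies, Finset.sum_eq_zero_iff_of_nonneg fun j _ ↦ hnonneg _ j,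
    inv_degree_mul_sub_eq_zero_iff G (hdeg _), mem_neighborFinset, eq_top_iff_forall_degree_eq]
  refine ⟨fun h j ↦ ?_, fun h _ j _ ↦ h j⟩
  obtain ⟨i, hji⟩ := (G.degree_pos_iff_exists_adj j).mp (hdeg j)
  exact h i j hji.symm

end SimpleGraph

theorem stmt_14 {n : ℕ} (hn : 2 ≤ n) (G : SimpleGraph (Fin n)) [DecidableRel G.Adj]
    (hG : G.Connected) :
    (2 / (n : ℝ)) * randic G ≥ 1 / ((n : ℝ) - 1) ∧
      ((2 / (n : ℝ)) * randic G = 1 / ((n : ℝ) - 1) ↔ G = ⊤) := by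
  have : Nontrivial (Fin n) := Fin.nontrivial_iff_two_le.mpr hn
  have hdeg (v : Fin n) : 0 < G.degree v := hG.preconnected.degree_pos_of_nontrivial v
  have hn0 : (0 : ℝ) < n := by positivity
  have hcard : ((Fintype.card (Fin n) - 1 : ℕ) : ℝ) = n - 1 := by
    rw [Fintype.card_fin, Nat.cast_pred (by omega)]
  have hrandic : 2 / (n : ℝ) * randic G =
      (∑ i, ∑ j ∈ G.neighborFinset i, (1 : ℝ) / (G.degree i * G.degree j)) / n := by
    rw [randic]; ring
  have hbound : 1 / ((n : ℝ) - 1) = n / (n - 1) / n := by field_simp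
  rw [hrandic, hbound, ge_iff_le, div_le_div_iff_of_pos_right hn0, div_left_inj' hn0.ne']
  have hle := G.card_div_le_sum_one_div_degree_mul hdeg
  have heq := G.sum_one_div_degree_mul_eq_card_div_iff hdeg
  rw [hcard, Fintype.card_fin] at hle heq
  exact ⟨hle, heq⟩
end

section
/- Let n ≥ 3 and let b be a real with n²/(n−1) < b. Define Q = (n + √((b(h*+1) − n²)/h*))/(1 + h*) with h* = ⌊n²/b⌋ ≥ 1, and R = (n − √((b(n−1) − n²)/(n−2)))/(n−1). Then R ≤ Q. -/
/-! Both square roots are beside the point: `R ≤ n / (n - 1)` and `n / (1 + h*) ≤ Q`. Since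
`h* ≤ n² / b < n - 1` and both are integers, `1 + h* ≤ n - 1`, whence `n / (n - 1) ≤ n / (1 + h*)`. -/

open Real

theorem Nat.floor_div_lt_of_div_lt {a b c : ℝ} (ha : 0 ≤ a) (hc : 0 < c) (h : a / c < b) :
    (⌊a / b⌋₊ : ℝ) < c := by
  have hb : 0 < b := (div_nonneg ha hc.le).trans_lt h
  calc (⌊a / b⌋₊ : ℝ) ≤ a / b := Nat.floor_le (div_nonneg ha hb.le)
    _ < c := by rwa [div_lt_iff₀ hb, mul_comm, ← div_lt_iff₀ hc]

theorem sub_div_le_add_div {x s t p q : ℝ} (hx : 0 ≤ x) (hs : 0 ≤ s) (ht : 0 ≤ t)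
    (hp : 0 < p) (hpq : p ≤ q) : (x - s) / q ≤ (x + t) / p :=
  calc (x - s) / q ≤ x / q := by gcongr; linarith [hp.trans_le hpq]; linarith
    _ ≤ x / p := div_le_div_of_nonneg_left hx hp hpq
    _ ≤ (x + t) / p := by gcongr; linarith

theorem stmt_16_general {n : ℕ} (hn : 3 ≤ n) (b : ℝ) (hb : (n : ℝ) ^ 2 / ((n : ℝ) - 1) < b)
    (hstar : ℕ) (hh : hstar = ⌊(n : ℝ) ^ 2 / b⌋₊) :
    ((n : ℝ) - Real.sqrt ((b * ((n : ℝ) - 1) - (n : ℝ) ^ 2) / ((n : ℝ) - 2))) / ((n : ℝ) - 1) ≤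
      ((n : ℝ) + Real.sqrt ((b * (hstar + 1) - (n : ℝ) ^ 2) / hstar)) / (1 + hstar) := by
  have hn1 : (0 : ℝ) < n - 1 := by
    have : (3 : ℝ) ≤ n := by exact_mod_cast hn
    linarith
  have hlt : (hstar : ℝ) < n - 1 := hh ▸ Nat.floor_div_lt_of_div_lt (sq_nonneg _) hn1 hb
  have hle : hstar + 2 ≤ n := by
    have : (hstar + 1 : ℝ) < n := by linarith
    exact_mod_cast this
  have hden : (1 + hstar : ℝ) ≤ n - 1 := by
    have : (hstar + 2 : ℝ) ≤ n := by exact_mod_cast hle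
    linarith
  exact sub_div_le_add_div (Nat.cast_nonneg n) (sqrt_nonneg _) (sqrt_nonneg _)
    (by positivity) hden

theorem stmt_16 {n : ℕ} (hn : 3 ≤ n) (b : ℝ) (hb : (n : ℝ) ^ 2 / ((n : ℝ) - 1) < b)
    (hstar : ℕ) (hh : hstar = ⌊(n : ℝ) ^ 2 / b⌋₊) (hh1 : 1 ≤ hstar) :
    ((n : ℝ) - Real.sqrt ((b * ((n : ℝ) - 1) - (n : ℝ) ^ 2) / ((n : ℝ) - 2))) / ((n : ℝ) - 1) ≤
      ((n : ℝ) + Real.sqrt ((b * (hstar + 1) - (n : ℝ) ^ 2) / hstar)) / (1 + hstar) :=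
  stmt_16_general hn b hb hstar hh
end
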